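/- arXiv:2504.17952 — 4 statements merged into one kernel-verified Lean document; each statement's English description precedes it below -/
import Mathlib

section
/- For all i,j ∈ ℤ one has ⟨β_i, α_j^∨⟩ = b_{ji} and ⟨γ_i, α_j^∨⟩ = -b_{ij}, i.e. ⟨β_i, e_{j+1}⟩ - ⟨β_i, e_j⟩ = b_{ji} and ⟨γ_i, e_{j+1}⟩ - ⟨γ_i, e_j⟩ = -b_{ij}. -/
/-- `b i j = -2` if `j = i` or `j = i+1`, and `b i j = 4 · sgn(j-i) · (-1)^(j-i)` otherwise. -/
def b (i j : ℤ) : ℤ :=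
  if j = i ∨ j = i + 1 then -2 else 4 * (j - i).sign * (-1) ^ (j - i).natAbs

/-- `beta i j = ⟨β_i, e_j⟩`: equal to `(-1)^i · 2` if `j = i`, to `(-1)^i · 4` if
`(-1)^j · j > (-1)^j · i`, and `0` otherwise.  (An element of `X = Hom_ℤ(𝔥, ℤ)` is
determined by its values on the basis `e_j`, so we model `β_i` by the function
`j ↦ ⟨β_i, e_j⟩`.) -/
def beta (i j : ℤ) : ℤ :=
  if j = i then (-1) ^ i.natAbs * 2
  else if (-1) ^ j.natAbs * j > (-1) ^ j.natAbs * i then (-1) ^ i.natAbs * 4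
  else 0

/-- `gamma i j = ⟨γ_i, e_j⟩` where `γ_i = -β_{i+1}`. -/
def gamma (i j : ℤ) : ℤ := - beta (i + 1) j

lemma epow (n : ℤ) : (-1:ℤ) ^ n.natAbs = if Even n then 1 else -1 := by
  split_ifs with h
  · exact (Int.natAbs_even.mpr h).neg_one_pow
  · exact (Int.natAbs_odd.mpr (Int.not_even_iff_odd.mp h)).neg_one_pow

lemma epow_sub (a c : ℤ) : (-1:ℤ) ^ (a - c).natAbs = (-1) ^ a.natAbs * (-1) ^ c.natAbs := by
  by_cases h1 : Even a <;> by_cases h2 : Even c <;>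
    simp [epow, Int.even_sub, h1, h2]

lemma b_eq (i j : ℤ) : b i j = if j = i ∨ j = i + 1 then -2
    else (if i < j then 4 else -4) * ((-1:ℤ) ^ j.natAbs * (-1) ^ i.natAbs) := by
  unfold b
  split_ifs with h h2
  · rfl
  · rw [Int.sign_eq_one_iff_pos.mpr (by omega), epow_sub]; ring
  · rw [Int.sign_eq_neg_one_iff_neg.mpr (by omega), epow_sub]; ring

lemma beta_pair (i j : ℤ) : beta i (j + 1) - beta i j = b j i := by
  rw [b_eq]
  unfold beta
  rw [epow i, epow j, epow (j+1)]
  obtain ⟨k, hk | hk⟩ := Int.even_or_odd' j <;>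
  obtain ⟨m, hm | hm⟩ := Int.even_or_odd' i <;>
  subst hk hm <;>
  simp only [Int.even_add_one, parity_simps] <;>
  norm_num <;> split_ifs <;> omega

lemma b_swap (i j : ℤ) : b j (i + 1) = b i j := by
  rw [b_eq, b_eq, epow i, epow j, epow (i+1)]
  obtain ⟨k, hk | hk⟩ := Int.even_or_odd' j <;>
  obtain ⟨m, hm | hm⟩ := Int.even_or_odd' i <;>
  subst hk hm <;>
  simp only [Int.even_add_one, parity_simps] <;>
  norm_num <;> split_ifs <;> omega

/-- `⟨β_i, α_j^∨⟩ = b j i` and `⟨γ_i, α_j^∨⟩ = - b i j`, where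
`⟨λ, α_j^∨⟩ = ⟨λ, e_{j+1}⟩ - ⟨λ, e_j⟩`. -/
theorem beta_gamma_pairing :
    ∀ i j : ℤ,
      (beta i (j + 1) - beta i j = b j i) ∧
      (gamma i (j + 1) - gamma i j = - b i j) := by
  intro i j
  refine ⟨beta_pair i j, ?_⟩
  unfold gamma
  have := beta_pair (i + 1) j
  rw [← b_swap i j]
  omega
end

section
/- Let V be the free ℚ(q)-module with basis (v_i)_{i∈ℤ}. There is a right U_q𝔤-module structure on V, i.e. a ℚ(q)-algebra homomorphism from U_q𝔤 to the opposite of End_{ℚ(q)}(V), such that v_j·F_i = δ_{ij}·v_{j+1}, v_j·E_i = δ_{i+1,j}·v_{j-1}, and v_j·K_λ = q^{⟨λ,e_j⟩}·v_j for all i,j ∈ ℤ and λ ∈ X. -/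
set_option synthInstance.maxHeartbeats 1000000
set_option maxHeartbeats 1000000

noncomputable section

/-- The ground field `ℚ(q)`, rational functions over `ℚ`. -/
abbrev K : Type := RatFunc ℚ

/-- The variable `q ∈ ℚ(q)`. -/
def q : K := RatFunc.X

/-- `βEF i j = 0` if `i = j`, `3(j-i)` if `|i-j| = 1`, and
`-4 · sgn(j-i) · (-1)^(j-i)` otherwise. -/
def betaEF (i j : ℤ) : ℤ :=
  if i = j then 0
  else if |i - j| = 1 then 3 * (j - i)
  else -4 * (j - i).sign * (-1) ^ (j - i).natAbs

/-- The simple root `α_i ∈ X`, with `⟨α_i, e_j⟩ = δ_{j,i+1} - δ_{j,i}`. -/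
def alphaX (i : ℤ) : ℤ → ℤ := fun j =>
  (if j = i + 1 then 1 else 0) - (if j = i then 1 else 0)

/-- Generators of `U_q𝔤`: the `E_i`, `F_i` (`i ∈ ℤ`) and the `K_λ` (`λ ∈ X`, where an
element of `X = Hom_ℤ(𝔥, ℤ)` is modelled by the function `ℤ → ℤ` of its values on the
basis `e_j`). -/
inductive UqGen where
  | E : ℤ → UqGen
  | F : ℤ → UqGen
  | K : (ℤ → ℤ) → UqGen

def EιQ (i : ℤ) : FreeAlgebra K UqGen := FreeAlgebra.ι K (UqGen.E i)
def FιQ (i : ℤ) : FreeAlgebra K UqGen := FreeAlgebra.ι K (UqGen.F i)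
def KιQ (lam : ℤ → ℤ) : FreeAlgebra K UqGen := FreeAlgebra.ι K (UqGen.K lam)

/-- The defining relations of the quantum electrical Hopf algebra `U_q𝔤`, where
`⟨λ, α_i^∨⟩ = λ(i+1) - λ(i)` and `[2] = q + q⁻¹`. -/
inductive UqRel : FreeAlgebra K UqGen → FreeAlgebra K UqGen → Prop
  | kk (lam mu : ℤ → ℤ) : UqRel (KιQ lam * KιQ mu) (KιQ (lam + mu))
  | k0 : UqRel (KιQ 0) 1
  | kf (lam : ℤ → ℤ) (i : ℤ) :
      UqRel (KιQ lam * FιQ i) ((q ^ (-(lam (i + 1) - lam i))) • (FιQ i * KιQ lam))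
  | ke (lam : ℤ → ℤ) (i : ℤ) :
      UqRel (KιQ lam * EιQ i) ((q ^ (lam (i + 1) - lam i)) • (EιQ i * KιQ lam))
  | ef (i j : ℤ) :
      UqRel (EιQ i * FιQ j)
        ((q ^ betaEF i j) • (FιQ j * EιQ i) +
          (if i = j then ((q - q⁻¹)⁻¹) • (KιQ (alphaX i) - KιQ (-(alphaX i))) else 0))
  | fdistant (i j : ℤ) (h : 1 < |i - j|) :
      UqRel (FιQ i * FιQ j) ((q ^ b i j) • (FιQ j * FιQ i))
  | fserre_up (i : ℤ) :
      UqRel ((q ^ (3 : ℤ)) • (FιQ i * FιQ i * FιQ (i + 1)) -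
          (q + q⁻¹) • (FιQ i * FιQ (i + 1) * FιQ i) +
          (q ^ (-3 : ℤ)) • (FιQ (i + 1) * FιQ i * FιQ i)) 0
  | fserre_down (i : ℤ) :
      UqRel ((q ^ (-3 : ℤ)) • (FιQ i * FιQ i * FιQ (i - 1)) -
          (q + q⁻¹) • (FιQ i * FιQ (i - 1) * FιQ i) +
          (q ^ (3 : ℤ)) • (FιQ (i - 1) * FιQ i * FιQ i)) 0
  | edistant (i j : ℤ) (h : 1 < |i - j|) :
      UqRel (EιQ i * EιQ j) ((q ^ b i j) • (EιQ j * EιQ i))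
  | eserre_up (i : ℤ) :
      UqRel ((q ^ (3 : ℤ)) • (EιQ i * EιQ i * EιQ (i + 1)) -
          (q + q⁻¹) • (EιQ i * EιQ (i + 1) * EιQ i) +
          (q ^ (-3 : ℤ)) • (EιQ (i + 1) * EιQ i * EιQ i)) 0
  | eserre_down (i : ℤ) :
      UqRel ((q ^ (-3 : ℤ)) • (EιQ i * EιQ i * EιQ (i - 1)) -
          (q + q⁻¹) • (EιQ i * EιQ (i - 1) * EιQ i) +
          (q ^ (3 : ℤ)) • (EιQ (i - 1) * EιQ i * EιQ i)) 0

/-- The quantum electrical Hopf algebra `U_q𝔤` (as an algebra). -/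
abbrev Uq : Type := RingQuot UqRel

def EgQ (i : ℤ) : Uq := RingQuot.mkAlgHom K UqRel (EιQ i)
def FgQ (i : ℤ) : Uq := RingQuot.mkAlgHom K UqRel (FιQ i)
def KgQ (lam : ℤ → ℤ) : Uq := RingQuot.mkAlgHom K UqRel (KιQ lam)


/-- The natural module `V`, the free `ℚ(q)`-module with basis `v_i` (`i ∈ ℤ`);
`v_i` is `Finsupp.single i 1`. -/
abbrev Vmod : Type := ℤ →₀ K

lemma q_ne_zero : (q : K) ≠ 0 := RatFunc.X_ne_zero

lemma q_sub_inv_ne_zero : q - q⁻¹ ≠ 0 := by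
  intro h
  have hq := q_ne_zero
  have h2 : (RatFunc.X : K) * RatFunc.X = 1 := by
    have h1 : q = q⁻¹ := sub_eq_zero.mp h
    calc (RatFunc.X : K) * RatFunc.X = q * q := rfl
    _ = q * q⁻¹ := by rw [← h1]
    _ = 1 := mul_inv_cancel₀ hq
  have h3 : (Polynomial.X : Polynomial ℚ) * Polynomial.X = 1 := by
    apply IsFractionRing.injective (Polynomial ℚ) K
    simpa [RatFunc.algebraMap_X] using h2
  rw [← pow_two] at h3
  have h4 := congrArg Polynomial.natDegree h3
  rw [Polynomial.natDegree_X_pow, Polynomial.natDegree_one] at h4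
  omega

def vF (i : ℤ) : Module.End K Vmod :=
  Finsupp.lsum K fun j => if i = j then Finsupp.lsingle (j + 1) else 0
def vE (i : ℤ) : Module.End K Vmod :=
  Finsupp.lsum K fun j => if j = i + 1 then Finsupp.lsingle (j - 1) else 0
def vK (lam : ℤ → ℤ) : Module.End K Vmod :=
  Finsupp.lsum K fun j => (q ^ lam j) • Finsupp.lsingle j

lemma vF_single (i j : ℤ) (c : K) :
    vF i (Finsupp.single j c) = if i = j then Finsupp.single (j + 1) c else 0 := by
  simp only [vF, Finsupp.lsum_single]
  split <;> simp

lemma vE_single (i j : ℤ) (c : K) :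
    vE i (Finsupp.single j c) = if j = i + 1 then Finsupp.single (j - 1) c else 0 := by
  simp only [vE, Finsupp.lsum_single]
  split <;> simp

lemma vK_single (lam : ℤ → ℤ) (j : ℤ) (c : K) :
    vK lam (Finsupp.single j c) = (q ^ lam j) • Finsupp.single j c := by
  simp only [vK, Finsupp.lsum_single]
  simp

def genMap : UqGen → (Module.End K Vmod)ᵐᵒᵖ
  | .E i => MulOpposite.op (vE i)
  | .F i => MulOpposite.op (vF i)
  | .K lam => MulOpposite.op (vK lam)

def rho0 : FreeAlgebra K UqGen →ₐ[K] (Module.End K Vmod)ᵐᵒᵖ := FreeAlgebra.lift K genMap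

lemma rho0_E (i : ℤ) : rho0 (EιQ i) = MulOpposite.op (vE i) := by
  simp [rho0, EιQ, genMap]
lemma rho0_F (i : ℤ) : rho0 (FιQ i) = MulOpposite.op (vF i) := by
  simp [rho0, FιQ, genMap]
lemma rho0_K (lam : ℤ → ℤ) : rho0 (KιQ lam) = MulOpposite.op (vK lam) := by
  simp [rho0, KιQ, genMap]

lemma rho0_sound : ∀ ⦃x y⦄, UqRel x y → rho0 x = rho0 y := by
  intro x y h
  induction h with
  | kk lam mu =>
    apply MulOpposite.unop_injective
    refine Finsupp.lhom_ext fun m c => ?_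
    simp only [map_mul, rho0_K, MulOpposite.unop_mul, MulOpposite.unop_op,
      Module.End.mul_apply, vK_single, map_smul, smul_smul, Pi.add_apply,
      zpow_add₀ q_ne_zero]
  | k0 =>
    apply MulOpposite.unop_injective
    refine Finsupp.lhom_ext fun m c => ?_
    simp only [rho0_K, MulOpposite.unop_op, vK_single, Pi.zero_apply, zpow_zero,
      one_smul, map_one, MulOpposite.unop_one, Module.End.one_apply]
  | kf lam i =>
    apply MulOpposite.unop_injective
    refine Finsupp.lhom_ext fun m c => ?_
    simp only [map_mul, map_smul, rho0_K, rho0_F, MulOpposite.unop_mul,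
      MulOpposite.unop_smul, MulOpposite.unop_op, Module.End.mul_apply,
      LinearMap.smul_apply, vK_single, vF_single, map_smul, smul_ite, smul_zero]
    split
    · next h =>
      subst h
      rw [vK_single, smul_smul, ← zpow_add₀ q_ne_zero,
        show -(lam (i + 1) - lam i) + lam (i + 1) = lam i by ring]
    · simp
  | ke lam i =>
    apply MulOpposite.unop_injective
    refine Finsupp.lhom_ext fun m c => ?_
    simp only [map_mul, map_smul, rho0_K, rho0_E, MulOpposite.unop_mul,
      MulOpposite.unop_smul, MulOpposite.unop_op, Module.End.mul_apply,
      LinearMap.smul_apply, vK_single, vE_single, map_smul, smul_ite, smul_zero]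
    split
    · next h =>
      subst h
      rw [vK_single, smul_smul, ← zpow_add₀ q_ne_zero,
        show lam (i + 1) - lam i + lam (i + 1 - 1) = lam (i + 1) by
          rw [show (i : ℤ) + 1 - 1 = i by ring]; ring]
    · simp
  | ef i j =>
    apply MulOpposite.unop_injective
    refine Finsupp.lhom_ext fun m c => ?_
    by_cases hij : i = j
    · subst hij
      have hne := q_sub_inv_ne_zero
      have hii : (i : ℤ) + 1 ≠ i := by omega
      have hii' : (i : ℤ) ≠ i + 1 := by omega
      have ha1 : alphaX i (i + 1) = 1 := by simp [alphaX, hii]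
      have ha2 : (-(alphaX i)) (i + 1) = -1 := by simp [alphaX, hii]
      have hb1 : alphaX i i = -1 := by simp [alphaX, hii']
      have hb2 : (-(alphaX i)) i = 1 := by simp [alphaX, hii']
      have hbeta : betaEF i i = 0 := by simp [betaEF]
      rw [if_pos rfl]
      simp only [map_mul, map_add, map_smul, map_sub, rho0_E, rho0_F, rho0_K,
        MulOpposite.unop_mul, MulOpposite.unop_add, MulOpposite.unop_smul,
        MulOpposite.unop_sub, MulOpposite.unop_op, LinearMap.add_apply,
        Module.End.mul_apply, LinearMap.smul_apply, LinearMap.sub_apply,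
        vE_single, vF_single, vK_single, hbeta, zpow_zero, one_smul]
      by_cases hm : m = i + 1
      · subst hm
        rw [if_pos rfl, if_neg hii', map_zero, zero_add, vF_single,
          if_pos (by omega : i = i + 1 - 1), ha1, ha2, zpow_one, zpow_neg_one,
          ← sub_smul, smul_smul, inv_mul_cancel₀ hne, one_smul,
          (by omega : (i : ℤ) + 1 - 1 + 1 = i + 1)]
      · rw [if_neg hm, map_zero]
        by_cases hm2 : i = m
        · subst hm2
          rw [if_pos rfl, vE_single, if_pos rfl, hb1, hb2, zpow_neg_one, zpow_one,
            (by omega : (i : ℤ) + 1 - 1 = i), ← sub_smul, smul_smul]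
          rw [show (q - q⁻¹)⁻¹ * (q⁻¹ - q) = -1 by
            rw [show q⁻¹ - q = -(q - q⁻¹) by ring, mul_neg, inv_mul_cancel₀ hne]]
          simp
        · have hmi : ¬ m = i := fun h => hm2 h.symm
          have hz1 : alphaX i m = 0 := by simp [alphaX, hm, hmi]
          have hz2 : (-(alphaX i)) m = 0 := by simp [alphaX, hm, hmi]
          simp only [if_neg hm2, map_zero, smul_zero, zero_add, hz1, hz2, zpow_zero,
            one_smul, sub_self, add_zero]
    · simp only [map_mul, map_add, map_smul, if_neg hij, add_zero, rho0_E, rho0_F,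
        MulOpposite.unop_mul, MulOpposite.unop_smul, MulOpposite.unop_op,
        Module.End.mul_apply, LinearMap.smul_apply, vE_single, vF_single]
      by_cases hm : m = i + 1
      · subst hm
        have hji : ¬ j = i + 1 - 1 := by omega
        simp only [if_true, eq_self_iff_true, if_pos rfl, vF_single, if_neg hji, map_zero, smul_zero]
        by_cases hjm : j = i + 1
        · simp only [if_pos hjm, vE_single,
            if_neg (show ¬ (i : ℤ) + 1 + 1 = i + 1 by omega), smul_zero]
        · simp only [if_neg hjm, map_zero, smul_zero]
      · simp only [if_true, eq_self_iff_true, if_neg hm, map_zero]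
        by_cases hjm : j = m
        · subst hjm
          have h2 : ¬ j + 1 = i + 1 := by omega
          simp only [if_true, eq_self_iff_true, if_pos rfl, vE_single, if_neg h2, smul_zero]
        · simp only [if_neg hjm, map_zero, smul_zero]
  | fdistant i j hd =>
    have hd2 := lt_abs.mp hd
    apply MulOpposite.unop_injective
    refine Finsupp.lhom_ext fun m c => ?_
    simp only [map_mul, map_smul, rho0_F, MulOpposite.unop_mul, MulOpposite.unop_smul,
      MulOpposite.unop_op, Module.End.mul_apply, LinearMap.smul_apply, vF_single]
    by_cases h1 : i = m
    · subst h1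
      simp only [if_true, eq_self_iff_true, if_pos rfl, vF_single, if_neg (show ¬ j = i + 1 by omega),
        if_neg (show ¬ j = i by omega), map_zero, smul_zero]
    · simp only [if_neg h1, if_true, eq_self_iff_true]
      by_cases h2 : j = m
      · subst h2
        simp only [if_true, eq_self_iff_true, if_pos rfl, vF_single, if_neg (show ¬ i = j + 1 by omega),
          map_zero, smul_zero]
      · simp only [if_neg h2, map_zero, smul_zero]
  | edistant i j hd =>
    have hd2 := lt_abs.mp hd
    apply MulOpposite.unop_injective
    refine Finsupp.lhom_ext fun m c => ?_
    simp only [map_mul, map_smul, rho0_E, MulOpposite.unop_mul, MulOpposite.unop_smul,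
      MulOpposite.unop_op, Module.End.mul_apply, LinearMap.smul_apply, vE_single]
    by_cases h1 : m = i + 1
    · subst h1
      simp only [if_true, eq_self_iff_true, if_pos rfl, vE_single, if_neg (show ¬ i + 1 - 1 = j + 1 by omega),
        if_neg (show ¬ i + 1 = j + 1 by omega), map_zero, smul_zero]
    · simp only [if_neg h1, if_true, eq_self_iff_true]
      by_cases h2 : m = j + 1
      · subst h2
        simp only [if_true, eq_self_iff_true, if_pos rfl, vE_single, if_neg (show ¬ j + 1 - 1 = i + 1 by omega),
          map_zero, smul_zero]
      · simp only [if_neg h2, map_zero, smul_zero]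
  | fserre_up i =>
    apply MulOpposite.unop_injective
    refine Finsupp.lhom_ext fun m c => ?_
    have e1 : ¬ (i : ℤ) + 1 = i := by omega
    have e2 : ¬ (i : ℤ) = i + 1 := by omega
    have e3 : ¬ (i : ℤ) = i + 1 + 1 := by omega
    simp only [map_add, map_sub, map_smul, map_mul, map_zero, rho0_F,
      MulOpposite.unop_add, MulOpposite.unop_sub, MulOpposite.unop_smul,
      MulOpposite.unop_mul, MulOpposite.unop_op, MulOpposite.unop_zero,
      LinearMap.add_apply, LinearMap.sub_apply, LinearMap.smul_apply,
      Module.End.mul_apply, LinearMap.zero_apply]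
    by_cases h1 : i = m
    · subst h1
      simp only [vF_single, if_pos rfl, if_true, eq_self_iff_true, if_neg e1, if_neg e2,
        if_neg e3, map_zero, smul_zero, sub_zero, zero_add, add_zero, zero_sub, neg_zero,
        sub_self]
    · by_cases h2 : i + 1 = m
      · subst h2
        simp only [vF_single, if_pos rfl, if_true, eq_self_iff_true, if_neg e2,
          if_neg e3, map_zero, smul_zero, sub_zero, zero_add, add_zero, sub_self]
      · simp only [vF_single, if_neg h1, if_neg h2, map_zero, smul_zero, sub_zero,
          zero_add, add_zero, sub_self]
  | fserre_down i =>
    apply MulOpposite.unop_injective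
    refine Finsupp.lhom_ext fun m c => ?_
    have e2 : ¬ (i : ℤ) = i + 1 := by omega
    have d1 : ¬ (i : ℤ) - 1 = i + 1 := by omega
    have d2 : ¬ (i : ℤ) - 1 = i := by omega
    have n1 : ¬ (i : ℤ) = i - 1 := by omega
    have p1 : (i : ℤ) = i - 1 + 1 := by omega
    have n2 : ¬ (i : ℤ) = i - 1 + 1 + 1 := by omega
    simp only [map_add, map_sub, map_smul, map_mul, map_zero, rho0_F,
      MulOpposite.unop_add, MulOpposite.unop_sub, MulOpposite.unop_smul,
      MulOpposite.unop_mul, MulOpposite.unop_op, MulOpposite.unop_zero,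
      LinearMap.add_apply, LinearMap.sub_apply, LinearMap.smul_apply,
      Module.End.mul_apply, LinearMap.zero_apply]
    by_cases h1 : i = m
    · subst h1
      simp only [vF_single, if_pos rfl, if_true, eq_self_iff_true, if_neg e2, if_neg d1,
        if_neg d2, map_zero, smul_zero, sub_zero, zero_add, add_zero, zero_sub, neg_zero,
        sub_self]
    · by_cases h2 : i - 1 = m
      · subst h2
        simp only [vF_single, if_pos rfl, if_pos p1, if_true, eq_self_iff_true,
          if_neg n1, if_neg n2, map_zero, smul_zero, sub_zero, zero_add, add_zero,
          zero_sub, neg_zero, sub_self]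
      · simp only [vF_single, if_neg h1, if_neg h2, map_zero, smul_zero, sub_zero,
          zero_add, add_zero, sub_self]
  | eserre_up i =>
    apply MulOpposite.unop_injective
    refine Finsupp.lhom_ext fun m c => ?_
    have a1 : ¬ (i : ℤ) + 1 - 1 = i + 1 := by omega
    have a2 : ¬ (i : ℤ) + 1 - 1 = i + 1 + 1 := by omega
    have a3 : ¬ (i : ℤ) + 1 = i + 1 + 1 := by omega
    have p1 : (i : ℤ) + 1 + 1 - 1 = i + 1 := by omega
    have a4 : ¬ (i : ℤ) + 1 + 1 = i + 1 := by omega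
    have a5 : ¬ (i : ℤ) + 1 + 1 - 1 - 1 = i + 1 := by omega
    simp only [map_add, map_sub, map_smul, map_mul, map_zero, rho0_E,
      MulOpposite.unop_add, MulOpposite.unop_sub, MulOpposite.unop_smul,
      MulOpposite.unop_mul, MulOpposite.unop_op, MulOpposite.unop_zero,
      LinearMap.add_apply, LinearMap.sub_apply, LinearMap.smul_apply,
      Module.End.mul_apply, LinearMap.zero_apply]
    by_cases h1 : m = i + 1
    · subst h1
      simp only [vE_single, if_pos rfl, if_true, eq_self_iff_true, if_neg a1, if_neg a2,
        if_neg a3, map_zero, smul_zero, sub_zero, zero_add, add_zero, zero_sub, neg_zero,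
        sub_self]
    · by_cases h2 : m = i + 1 + 1
      · subst h2
        simp only [vE_single, if_pos rfl, if_pos p1, if_true, eq_self_iff_true,
          if_neg a4, if_neg a5, map_zero, smul_zero, sub_zero, zero_add, add_zero,
          zero_sub, neg_zero, sub_self]
      · simp only [vE_single, if_neg h1, if_neg h2, map_zero, smul_zero, sub_zero,
          zero_add, add_zero, sub_self]
  | eserre_down i =>
    apply MulOpposite.unop_injective
    refine Finsupp.lhom_ext fun m c => ?_
    have a1 : ¬ (i : ℤ) + 1 - 1 = i + 1 := by omega
    have p1 : (i : ℤ) + 1 - 1 = i - 1 + 1 := by omega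
    have a2 : ¬ (i : ℤ) + 1 - 1 - 1 = i + 1 := by omega
    have a3 : ¬ (i : ℤ) + 1 = i - 1 + 1 := by omega
    have a4 : ¬ (i : ℤ) - 1 + 1 = i + 1 := by omega
    have a5 : ¬ (i : ℤ) - 1 + 1 - 1 = i + 1 := by omega
    simp only [map_add, map_sub, map_smul, map_mul, map_zero, rho0_E,
      MulOpposite.unop_add, MulOpposite.unop_sub, MulOpposite.unop_smul,
      MulOpposite.unop_mul, MulOpposite.unop_op, MulOpposite.unop_zero,
      LinearMap.add_apply, LinearMap.sub_apply, LinearMap.smul_apply,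
      Module.End.mul_apply, LinearMap.zero_apply]
    by_cases h1 : m = i + 1
    · subst h1
      simp only [vE_single, if_pos rfl, if_pos p1, if_true, eq_self_iff_true,
        if_neg a1, if_neg a2, if_neg a3, map_zero, smul_zero, sub_zero, zero_add,
        add_zero, zero_sub, neg_zero, sub_self]
    · by_cases h2 : m = i - 1 + 1
      · subst h2
        simp only [vE_single, if_pos rfl, if_true, eq_self_iff_true, if_neg h1,
          if_neg a4, if_neg a5, map_zero, smul_zero, sub_zero, zero_add, add_zero,
          zero_sub, neg_zero, sub_self]
      · simp only [vE_single, if_neg h1, if_neg h2, map_zero, smul_zero, sub_zero,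
          zero_add, add_zero, sub_self]

/-- There is a right `U_q𝔤`-module structure on `V`, i.e. a `ℚ(q)`-algebra homomorphism
`ρ : U_q𝔤 → End(V)ᵐᵒᵖ`, such that `v_j·F_i = δ_{ij} v_{j+1}`, `v_j·E_i = δ_{i+1,j} v_{j-1}`
and `v_j·K_λ = q^{⟨λ,e_j⟩} v_j`. -/
theorem natural_representation :
    ∃ ρ : Uq →ₐ[K] (Module.End K Vmod)ᵐᵒᵖ,
      (∀ i j : ℤ, (ρ (FgQ i)).unop (Finsupp.single j (1 : K)) =
        if i = j then Finsupp.single (j + 1) (1 : K) else 0) ∧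
      (∀ i j : ℤ, (ρ (EgQ i)).unop (Finsupp.single j (1 : K)) =
        if j = i + 1 then Finsupp.single (j - 1) (1 : K) else 0) ∧
      (∀ (lam : ℤ → ℤ) (j : ℤ), (ρ (KgQ lam)).unop (Finsupp.single j (1 : K)) =
        (q ^ lam j) • Finsupp.single j (1 : K)) := by
  refine ⟨RingQuot.liftAlgHom K ⟨rho0, rho0_sound⟩, ?_, ?_, ?_⟩
  · intro i j
    rw [FgQ, RingQuot.liftAlgHom_mkAlgHom_apply, rho0_F, MulOpposite.unop_op, vF_single]
  · intro i j
    rw [EgQ, RingQuot.liftAlgHom_mkAlgHom_apply, rho0_E, MulOpposite.unop_op, vE_single]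
  · intro lam j
    rw [KgQ, RingQuot.liftAlgHom_mkAlgHom_apply, rho0_K, MulOpposite.unop_op, vK_single]


end
end

section
/- There is a right el^ε-module structure on V determined by v_j·ℰ_i = δ_{ij}·(v_{i+1} + q^ε·v_{i-1}) for all i,j ∈ ℤ, and a right el^{-ε}-module structure on V^⊛ determined by v^j·ℰ_i = δ_{i+2,j}·q^{-ε}·v^{i+1} + δ_{ij}·v^{i+1} for all i,j ∈ ℤ; that is, in each case the given operators on basis vectors satisfy the defining relations of the respective q-electrical algebra and hence extend to a right module structure. -/
noncomputable section

open scoped TensorProduct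

/-- The generator `ℰ_i` inside the free algebra. -/
def Eι (i : ℤ) : FreeAlgebra K ℤ := FreeAlgebra.ι K i

/-- The defining relations of the q-εlectrical algebra `el^ε`:
`ℰ_iℰ_j = q^{b_{ij}}ℰ_jℰ_i` for `|i-j| > 1`;
`q³ℰ_i²ℰ_{i+1} - [2]ℰ_iℰ_{i+1}ℰ_i + q^{-3}ℰ_{i+1}ℰ_i² = -q^ε[2]ℰ_i`; and
`q^{-3}ℰ_i²ℰ_{i-1} - [2]ℰ_iℰ_{i-1}ℰ_i + q³ℰ_{i-1}ℰ_i² = -q^ε[2]ℰ_i`,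
where `[2] = q + q⁻¹`. -/
inductive elRel (ε : ℤ) : FreeAlgebra K ℤ → FreeAlgebra K ℤ → Prop
  | distant (i j : ℤ) (h : 1 < |i - j|) :
      elRel ε (Eι i * Eι j) ((q ^ b i j) • (Eι j * Eι i))
  | up (i : ℤ) :
      elRel ε
        ((q ^ (3 : ℤ)) • (Eι i * Eι i * Eι (i + 1)) -
            (q + q⁻¹) • (Eι i * Eι (i + 1) * Eι i) +
            (q ^ (-3 : ℤ)) • (Eι (i + 1) * Eι i * Eι i))
        (-((q ^ ε * (q + q⁻¹)) • Eι i))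
  | down (i : ℤ) :
      elRel ε
        ((q ^ (-3 : ℤ)) • (Eι i * Eι i * Eι (i - 1)) -
            (q + q⁻¹) • (Eι i * Eι (i - 1) * Eι i) +
            (q ^ (3 : ℤ)) • (Eι (i - 1) * Eι i * Eι i))
        (-((q ^ ε * (q + q⁻¹)) • Eι i))

/-- The q-εlectrical algebra `el^ε`, presented by generators `ℰ_i` (`i ∈ ℤ`) and the
relations `elRel ε`. -/
abbrev el (ε : ℤ) : Type := RingQuot (elRel ε)

/-- The generator `ℰ_i` of `el^ε`. -/
def Egen (ε i : ℤ) : el ε := RingQuot.mkAlgHom K (elRel ε) (Eι i)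

set_option synthInstance.maxHeartbeats 1000000
set_option maxHeartbeats 1000000

def Ew (ε i : ℤ) : Vmod :=
  Finsupp.single (i+1) 1 + (q ^ ε) • Finsupp.single (i-1) 1

def Emap (ε i : ℤ) : Module.End K Vmod :=
  (Finsupp.lapply i : Vmod →ₗ[K] K).smulRight (Ew ε i)

lemma Emap_single_eq (ε i j : ℤ) (c : K) (h : j = i) :
    Emap ε i (Finsupp.single j c) = c • Ew ε i := by
  subst h
  rw [Emap]
  simp only [LinearMap.smulRight_apply, Finsupp.lapply_apply, Finsupp.single_apply, if_pos rfl,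
    if_true, eq_self_iff_true]

lemma Emap_single_ne (ε i j : ℤ) (c : K) (h : j ≠ i) :
    Emap ε i (Finsupp.single j c) = 0 := by
  rw [Emap]
  simp only [LinearMap.smulRight_apply, Finsupp.lapply_apply, Finsupp.single_apply,
    if_neg h, zero_smul]

lemma Emap_Ew_up (ε i j : ℤ) (h : j = i + 1) : Emap ε j (Ew ε i) = Ew ε j := by
  rw [Ew, map_add, map_smul, Emap_single_eq ε j _ _ (by omega),
    Emap_single_ne ε j _ _ (by omega)]
  simp

lemma Emap_Ew_down (ε i j : ℤ) (h : j = i - 1) : Emap ε j (Ew ε i) = q ^ ε • Ew ε j := by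
  rw [Ew, map_add, map_smul, Emap_single_ne ε j _ _ (by omega),
    Emap_single_eq ε j _ _ (by omega)]
  simp

lemma Emap_Ew_ne (ε i j : ℤ) (h1 : j ≠ i + 1) (h2 : j ≠ i - 1) : Emap ε j (Ew ε i) = 0 := by
  rw [Ew, map_add, map_smul, Emap_single_ne ε j _ _ (by omega),
    Emap_single_ne ε j _ _ (by omega)]
  simp

lemma Emap_comp_far (ε i j : ℤ) (h1 : j ≠ i + 1) (h2 : j ≠ i - 1) :
    Emap ε j * Emap ε i = 0 := by
  refine Finsupp.lhom_ext fun a c => ?_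
  rw [Module.End.mul_apply, LinearMap.zero_apply]
  rcases eq_or_ne a i with rfl | ha
  · rw [Emap_single_eq ε a a c rfl, map_smul, Emap_Ew_ne ε a j h1 h2, smul_zero]
  · rw [Emap_single_ne ε i a c ha, map_zero]

lemma Emap_up_braid (ε i : ℤ) :
    Emap ε i * (Emap ε (i+1) * Emap ε i) = q ^ ε • Emap ε i := by
  refine Finsupp.lhom_ext fun a c => ?_
  simp only [Module.End.mul_apply, LinearMap.smul_apply]
  rcases eq_or_ne a i with rfl | ha
  · rw [Emap_single_eq ε a a c rfl, map_smul, Emap_Ew_up ε a (a+1) rfl, map_smul,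
      Emap_Ew_down ε (a+1) a (by omega), smul_comm]
  · rw [Emap_single_ne ε i a c ha, map_zero, map_zero, smul_zero]

lemma Emap_down_braid (ε i : ℤ) :
    Emap ε i * (Emap ε (i-1) * Emap ε i) = q ^ ε • Emap ε i := by
  refine Finsupp.lhom_ext fun a c => ?_
  simp only [Module.End.mul_apply, LinearMap.smul_apply]
  rcases eq_or_ne a i with rfl | ha
  · rw [Emap_single_eq ε a a c rfl, map_smul, Emap_Ew_down ε a (a-1) rfl, map_smul,
      map_smul, Emap_Ew_up ε (a-1) a (by omega), smul_comm]
  · rw [Emap_single_ne ε i a c ha, map_zero, map_zero, smul_zero]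

def Fmap (δ i : ℤ) : Module.End K Vmod :=
  (Finsupp.lapply i : Vmod →ₗ[K] K).smulRight (Finsupp.single (i+1) 1) +
  (Finsupp.lapply (i+2) : Vmod →ₗ[K] K).smulRight ((q ^ δ) • Finsupp.single (i+1) 1)

lemma Fmap_single_self (δ i j : ℤ) (c : K) (h : j = i) :
    Fmap δ i (Finsupp.single j c) = c • Finsupp.single (i+1) 1 := by
  subst h
  rw [Fmap]
  simp only [LinearMap.add_apply, LinearMap.smulRight_apply, Finsupp.lapply_apply,
    Finsupp.single_apply, if_pos rfl, if_neg (show ¬ j = j + 2 by omega), zero_smul, add_zero,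
    if_true, eq_self_iff_true]

lemma Fmap_single_two (δ i j : ℤ) (c : K) (h : j = i + 2) :
    Fmap δ i (Finsupp.single j c) = (c * q ^ δ) • Finsupp.single (i+1) 1 := by
  subst h
  rw [Fmap]
  simp only [LinearMap.add_apply, LinearMap.smulRight_apply, Finsupp.lapply_apply,
    Finsupp.single_apply, if_pos rfl, if_neg (show ¬ i + 2 = i by omega), zero_smul, zero_add,
    smul_smul, if_true, eq_self_iff_true]

lemma Fmap_single_ne (δ i j : ℤ) (c : K) (h1 : j ≠ i) (h2 : j ≠ i + 2) :
    Fmap δ i (Finsupp.single j c) = 0 := by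
  rw [Fmap]
  simp only [LinearMap.add_apply, LinearMap.smulRight_apply, Finsupp.lapply_apply,
    Finsupp.single_apply, if_neg h1, if_neg h2, zero_smul, add_zero]

lemma Fmap_comp_far (δ i j : ℤ) (h1 : j ≠ i + 1) (h2 : j ≠ i - 1) :
    Fmap δ j * Fmap δ i = 0 := by
  refine Finsupp.lhom_ext fun a c => ?_
  rw [Module.End.mul_apply, LinearMap.zero_apply]
  rcases eq_or_ne a i with rfl | ha
  · rw [Fmap_single_self δ a a c rfl, map_smul,
      Fmap_single_ne δ j _ _ (by omega) (by omega), smul_zero]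
  rcases eq_or_ne a (i + 2) with rfl | ha2
  · rw [Fmap_single_two δ i _ c rfl, map_smul,
      Fmap_single_ne δ j _ _ (by omega) (by omega), smul_zero]
  · rw [Fmap_single_ne δ i a c ha ha2, map_zero]

lemma Fmap_up_braid (δ i : ℤ) :
    Fmap δ i * (Fmap δ (i+1) * Fmap δ i) = q ^ δ • Fmap δ i := by
  refine Finsupp.lhom_ext fun a c => ?_
  simp only [Module.End.mul_apply, LinearMap.smul_apply]
  rcases eq_or_ne a i with rfl | ha
  · rw [Fmap_single_self δ a a c rfl, map_smul, Fmap_single_self δ (a+1) (a+1) 1 rfl,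
      map_smul, map_smul, Fmap_single_two δ a (a+1+1) 1 (by omega)]
    simp only [one_smul, one_mul, smul_smul]; congr 1; ring
  rcases eq_or_ne a (i + 2) with rfl | ha2
  · rw [Fmap_single_two δ i _ c rfl, map_smul, Fmap_single_self δ (i+1) (i+1) 1 rfl,
      map_smul, map_smul, Fmap_single_two δ i (i+1+1) 1 (by omega)]
    simp only [one_smul, one_mul, smul_smul]; congr 1; ring
  · rw [Fmap_single_ne δ i a c ha ha2, map_zero, map_zero, smul_zero]

lemma Fmap_down_braid (δ i : ℤ) :
    Fmap δ i * (Fmap δ (i-1) * Fmap δ i) = q ^ δ • Fmap δ i := by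
  refine Finsupp.lhom_ext fun a c => ?_
  simp only [Module.End.mul_apply, LinearMap.smul_apply]
  rcases eq_or_ne a i with rfl | ha
  · rw [Fmap_single_self δ a a c rfl, map_smul, Fmap_single_two δ (a-1) (a+1) 1 (by omega),
      map_smul, map_smul, Fmap_single_self δ a (a-1+1) 1 (by omega)]
    simp only [one_smul, one_mul, smul_smul]; congr 1; ring
  rcases eq_or_ne a (i + 2) with rfl | ha2
  · rw [Fmap_single_two δ i _ c rfl, map_smul, Fmap_single_two δ (i-1) (i+1) 1 (by omega),
      map_smul, map_smul, Fmap_single_self δ i (i-1+1) 1 (by omega)]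
    simp only [one_smul, one_mul, smul_smul]; congr 1; ring
  · rw [Fmap_single_ne δ i a c ha ha2, map_zero, map_zero, smul_zero]

open MulOpposite in
lemma E_compat (ε : ℤ) : ∀ ⦃x y : FreeAlgebra K ℤ⦄, elRel ε x y →
    (FreeAlgebra.lift K fun i => MulOpposite.op (Emap ε i)) x =
    (FreeAlgebra.lift K fun i => MulOpposite.op (Emap ε i)) y := by
  intro x y h
  induction h with
  | distant i j h =>
    have hd : 1 < i - j ∨ 1 < j - i := by
      rcases lt_abs.mp h with h' | h'
      · exact Or.inl h'
      · right; omega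
    simp only [Eι, map_mul, map_smul, FreeAlgebra.lift_ι_apply]
    refine unop_injective ?_
    simp only [unop_mul, unop_smul, unop_op]
    rw [Emap_comp_far ε i j (by omega) (by omega), Emap_comp_far ε j i (by omega) (by omega),
      smul_zero]
  | up i =>
    simp only [Eι, map_add, map_sub, map_smul, map_mul, map_neg, FreeAlgebra.lift_ι_apply]
    refine unop_injective ?_
    simp only [unop_add, unop_sub, unop_smul, unop_mul, unop_neg, unop_op]
    rw [Emap_up_braid ε i, Emap_comp_far ε i i (by omega) (by omega), mul_zero, ← mul_assoc,
      Emap_comp_far ε i i (by omega) (by omega), zero_mul, smul_zero, smul_zero]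
    simp only [add_zero, smul_smul]
    rw [mul_comm]
    abel
  | down i =>
    simp only [Eι, map_add, map_sub, map_smul, map_mul, map_neg, FreeAlgebra.lift_ι_apply]
    refine unop_injective ?_
    simp only [unop_add, unop_sub, unop_smul, unop_mul, unop_neg, unop_op]
    rw [Emap_down_braid ε i, Emap_comp_far ε i i (by omega) (by omega), mul_zero, ← mul_assoc,
      Emap_comp_far ε i i (by omega) (by omega), zero_mul, smul_zero, smul_zero]
    simp only [add_zero, smul_smul]
    rw [mul_comm]
    abel

open MulOpposite in
lemma F_compat (δ : ℤ) : ∀ ⦃x y : FreeAlgebra K ℤ⦄, elRel δ x y →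
    (FreeAlgebra.lift K fun i => MulOpposite.op (Fmap δ i)) x =
    (FreeAlgebra.lift K fun i => MulOpposite.op (Fmap δ i)) y := by
  intro x y h
  induction h with
  | distant i j h =>
    have hd : 1 < i - j ∨ 1 < j - i := by
      rcases lt_abs.mp h with h' | h'
      · exact Or.inl h'
      · right; omega
    simp only [Eι, map_mul, map_smul, FreeAlgebra.lift_ι_apply]
    refine unop_injective ?_
    simp only [unop_mul, unop_smul, unop_op]
    rw [Fmap_comp_far δ i j (by omega) (by omega), Fmap_comp_far δ j i (by omega) (by omega),
      smul_zero]
  | up i =>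
    simp only [Eι, map_add, map_sub, map_smul, map_mul, map_neg, FreeAlgebra.lift_ι_apply]
    refine unop_injective ?_
    simp only [unop_add, unop_sub, unop_smul, unop_mul, unop_neg, unop_op]
    rw [Fmap_up_braid δ i, Fmap_comp_far δ i i (by omega) (by omega), mul_zero, ← mul_assoc,
      Fmap_comp_far δ i i (by omega) (by omega), zero_mul, smul_zero, smul_zero]
    simp only [add_zero, smul_smul]
    rw [mul_comm]
    abel
  | down i =>
    simp only [Eι, map_add, map_sub, map_smul, map_mul, map_neg, FreeAlgebra.lift_ι_apply]
    refine unop_injective ?_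
    simp only [unop_add, unop_sub, unop_smul, unop_mul, unop_neg, unop_op]
    rw [Fmap_down_braid δ i, Fmap_comp_far δ i i (by omega) (by omega), mul_zero, ← mul_assoc,
      Fmap_comp_far δ i i (by omega) (by omega), zero_mul, smul_zero, smul_zero]
    simp only [add_zero, smul_smul]
    rw [mul_comm]
    abel

/-- There is a right `el^ε`-module structure on `V` (an algebra homomorphism
`el^ε → End(V)ᵐᵒᵖ`) with `v_j·ℰ_i = δ_{ij}(v_{i+1} + q^ε v_{i-1})`, and a right
`el^{-ε}`-module structure on `V^⊛` with `v^j·ℰ_i = δ_{i+2,j}q^{-ε}v^{i+1} + δ_{ij}v^{i+1}`: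
the given operators on basis vectors satisfy the defining relations of the respective
q-electrical algebra and hence extend to a right module structure. -/
theorem natural_el_modules (ε : ℤ) (hε : ε = 1 ∨ ε = -1) :
    (∃ ρ : el ε →ₐ[K] (Module.End K Vmod)ᵐᵒᵖ,
      ∀ i j : ℤ, (ρ (Egen ε i)).unop (Finsupp.single j (1 : K)) =
        if i = j then
          Finsupp.single (i + 1) (1 : K) + (q ^ ε) • Finsupp.single (i - 1) (1 : K)
        else 0) ∧
    (∃ ρ : el (-ε) →ₐ[K] (Module.End K Vmod)ᵐᵒᵖ,
      ∀ i j : ℤ, (ρ (Egen (-ε) i)).unop (Finsupp.single j (1 : K)) =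
        (if j = i + 2 then (q ^ (-ε)) • Finsupp.single (i + 1) (1 : K) else 0) +
          (if i = j then Finsupp.single (i + 1) (1 : K) else 0)) := by
  refine ⟨⟨RingQuot.liftAlgHom K ⟨FreeAlgebra.lift K fun i => MulOpposite.op (Emap ε i),
      E_compat ε⟩, ?_⟩,
    ⟨RingQuot.liftAlgHom K ⟨FreeAlgebra.lift K fun i => MulOpposite.op (Fmap (-ε) i),
      F_compat (-ε)⟩, ?_⟩⟩
  · intro i j
    rw [Egen, RingQuot.liftAlgHom_mkAlgHom_apply]
    simp only [Eι, FreeAlgebra.lift_ι_apply, MulOpposite.unop_op]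
    rcases eq_or_ne i j with rfl | h
    · rw [Emap_single_eq ε i i 1 rfl, one_smul, if_pos rfl, Ew]
    · rw [Emap_single_ne ε i j 1 (Ne.symm h), if_neg h]
  · intro i j
    rw [Egen, RingQuot.liftAlgHom_mkAlgHom_apply]
    simp only [Eι, FreeAlgebra.lift_ι_apply, MulOpposite.unop_op]
    rcases eq_or_ne j (i + 2) with rfl | h2
    · rw [Fmap_single_two (-ε) i _ 1 rfl, one_mul, if_pos rfl, if_neg (by omega),
        add_zero]
    rcases eq_or_ne j i with rfl | h1
    · rw [Fmap_single_self (-ε) j j 1 rfl, one_smul, if_neg h2, if_pos rfl, zero_add]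
    · rw [Fmap_single_ne (-ε) i j 1 h1 h2, if_neg h2, if_neg (Ne.symm h1), add_zero]

end
end

section
/- Equip V with the right el^ε-action v_j·ℰ_i = δ_{ij}·(v_{i+1} + q^ε·v_{i-1}) and V^⊛ with the right el^{-ε}-action v^j·ℰ_i = δ_{i+2,j}·q^{-ε}·v^{i+1} + δ_{ij}·v^{i+1}, and let (·,·): V^⊛ × V → ℚ(q) be the ℚ(q)-bilinear pairing with (v^i, v_j) = δ_{ij}. Then (w·u, v) = (w, v·σ(u)) for all w ∈ V^⊛, v ∈ V and u ∈ el^{-ε}, where σ: el^{-ε} → el^{ε} is the algebra anti-isomorphism with σ(ℰ_i) = q^{-ε}·ℰ_{i+1}. -/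
noncomputable section

open scoped TensorProduct

set_option synthInstance.maxHeartbeats 1000000
set_option maxHeartbeats 1000000

/-- The `ℚ(q)`-bilinear pairing `(·,·) : V^⊛ × V → ℚ(q)` with `(v^i, v_j) = δ_{ij}`. -/
def pairV (w v : Vmod) : K := w.sum fun i c => c * v i

/-!
Both sides of the identity are compatible with sums, scalars and products in `u`: `ρD` turns
products into reversed compositions, `σ` reverses them back and `ρV` reverses them once more,
which is exactly how adjoints of compositions behave. So the set of `u` for which `ρD u` and
`ρV (σ u)` are adjoint for the pairing contains everything once it contains the generators `ℰ_i`.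
For a generator this is a comparison of matrix coefficients, where the factor `q^{-ε}` in `σ`
cancels the `q^ε` in the action on `V`.
-/

open LinearMap

lemma q_zpow_neg_mul_self (n : ℤ) : q ^ (-n) * q ^ n = 1 := by
  rw [← zpow_add₀ RatFunc.X_ne_zero, neg_add_cancel, zpow_zero]

def pairing : Vmod →ₗ[K] Vmod →ₗ[K] K :=
  Finsupp.lsum K fun i => smulRight LinearMap.id (Finsupp.lapply i)

theorem pairing_apply (w v : Vmod) : pairing w v = pairV w v := by
  simp [pairing, pairV, Finsupp.lsum_apply, Finsupp.sum, LinearMap.sum_apply]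

theorem pairing_single_one_left (j : ℤ) (v : Vmod) : pairing (Finsupp.single j 1) v = v j := by
  rw [pairing_apply, pairV, Finsupp.sum_single_index] <;> simp

theorem pairing_single_one_right (w : Vmod) (k : ℤ) : pairing w (Finsupp.single k 1) = w k := by
  rw [pairing_apply, pairV, Finsupp.sum_eq_single k] <;> simp_all

theorem isAdjointPair_pairing_of_single {f g : Module.End K Vmod}
    (h : ∀ j k, f (Finsupp.single j 1) k = g (Finsupp.single k 1) j) :
    IsAdjointPair pairing pairing f g := by
  rw [isAdjointPair_iff_comp_eq_compl₂]
  refine ext_basis Finsupp.basisSingleOne Finsupp.basisSingleOne fun j k => ?_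
  simp only [comp_apply, compl₂_apply, Finsupp.coe_basisSingleOne, pairing_single_one_left,
    pairing_single_one_right, h]

theorem isAdjointPair_generator (ε i : ℤ) {f g : Module.End K Vmod}
    (hf : ∀ j, f (Finsupp.single j 1) =
      (if j = i + 2 then (q ^ (-ε)) • Finsupp.single (i + 1) 1 else 0) +
        (if i = j then Finsupp.single (i + 1) 1 else 0))
    (hg : ∀ k, g (Finsupp.single k 1) =
      if i + 1 = k then Finsupp.single (i + 1 + 1) 1 + (q ^ ε) • Finsupp.single (i + 1 - 1) 1
      else 0) :
    IsAdjointPair pairing pairing f ⇑(q ^ (-ε) • g) := by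
  refine isAdjointPair_pairing_of_single fun j k => ?_
  rw [LinearMap.smul_apply, hf, hg]
  have hq := q_zpow_neg_mul_self ε
  simp only [Finsupp.add_apply, Finsupp.smul_apply, apply_ite (fun v : Vmod => v k),
    apply_ite (fun v : Vmod => v j), Finsupp.single_apply, Finsupp.coe_zero, Pi.zero_apply,
    smul_eq_mul]
  split_ifs <;> first | omega | simp_all

theorem el_induction {ε : ℤ} {P : el ε → Prop} (algebraMap : ∀ r, P (algebraMap K _ r))
    (gen : ∀ i, P (Egen ε i)) (add : ∀ a b, P a → P b → P (a + b))
    (mul : ∀ a b, P a → P b → P (a * b)) (u : el ε) : P u := by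
  obtain ⟨x, rfl⟩ := RingQuot.mkAlgHom_surjective K (elRel ε) u
  induction x using FreeAlgebra.induction with
  | grade0 r => simpa only [AlgHom.commutes] using algebraMap r
  | grade1 i => exact gen i
  | mul a b ha hb => simpa only [map_mul] using mul _ _ ha hb
  | add a b ha hb => simpa only [map_add] using add _ _ ha hb

theorem pairing_adjunction_general (ε : ℤ)
    (ρV : el ε →ₐ[K] (Module.End K Vmod)ᵐᵒᵖ)
    (hρV : ∀ i j : ℤ, (ρV (Egen ε i)).unop (Finsupp.single j (1 : K)) =
      if i = j then
        Finsupp.single (i + 1) (1 : K) + (q ^ ε) • Finsupp.single (i - 1) (1 : K)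
      else 0)
    (ρD : el (-ε) →ₐ[K] (Module.End K Vmod)ᵐᵒᵖ)
    (hρD : ∀ i j : ℤ, (ρD (Egen (-ε) i)).unop (Finsupp.single j (1 : K)) =
      (if j = i + 2 then (q ^ (-ε)) • Finsupp.single (i + 1) (1 : K) else 0) +
        (if i = j then Finsupp.single (i + 1) (1 : K) else 0))
    (σ : el (-ε) →ₗ[K] el ε)
    (hσmul : ∀ x y : el (-ε), σ (x * y) = σ y * σ x) (hσone : σ 1 = 1)
    (hσgen : ∀ i : ℤ, σ (Egen (-ε) i) = (q ^ (-ε)) • Egen ε (i + 1)) :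
    ∀ (u : el (-ε)) (w v : Vmod),
      pairV ((ρD u).unop w) v = pairV w ((ρV (σ u)).unop v) := by
  suffices ∀ u, IsAdjointPair pairing pairing (ρD u).unop (ρV (σ u)).unop by
    intro u w v
    simpa only [pairing_apply] using this u w v
  refine el_induction (fun r => ?_) (fun i => ?_) (fun a b ha hb => ?_) (fun a b ha hb => ?_)
  · have hσr : σ (algebraMap K _ r) = algebraMap K _ r := by
      rw [Algebra.algebraMap_eq_smul_one, map_smul, hσone, Algebra.algebraMap_eq_smul_one]
    rw [hσr, AlgHom.commutes, AlgHom.commutes]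
    simpa only [Algebra.algebraMap_eq_smul_one, MulOpposite.unop_smul, MulOpposite.unop_one,
      coe_smul] using isAdjointPair_one.smul r
  · rw [hσgen, map_smul, MulOpposite.unop_smul]
    exact isAdjointPair_generator ε i (hρD i) (hρV (i + 1))
  · rw [map_add, map_add, map_add, MulOpposite.unop_add, MulOpposite.unop_add]
    exact ha.add hb
  · rw [hσmul, map_mul, map_mul, MulOpposite.unop_mul, MulOpposite.unop_mul]
    exact hb.mul ha

/-- Equip `V` with the right `el^ε`-action `v_j·ℰ_i = δ_{ij}(v_{i+1} + q^ε v_{i-1})` and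
`V^⊛` with the right `el^{-ε}`-action `v^j·ℰ_i = δ_{i+2,j}q^{-ε}v^{i+1} + δ_{ij}v^{i+1}`,
and let `σ : el^{-ε} → el^ε` be the algebra anti-isomorphism with `σ ℰ_i = q^{-ε}ℰ_{i+1}`.
Then `(w·u, v) = (w, v·σ(u))` for all `w ∈ V^⊛`, `v ∈ V` and `u ∈ el^{-ε}`. -/
theorem pairing_adjunction (ε : ℤ) (hε : ε = 1 ∨ ε = -1)
    (ρV : el ε →ₐ[K] (Module.End K Vmod)ᵐᵒᵖ)
    (hρV : ∀ i j : ℤ, (ρV (Egen ε i)).unop (Finsupp.single j (1 : K)) =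
      if i = j then
        Finsupp.single (i + 1) (1 : K) + (q ^ ε) • Finsupp.single (i - 1) (1 : K)
      else 0)
    (ρD : el (-ε) →ₐ[K] (Module.End K Vmod)ᵐᵒᵖ)
    (hρD : ∀ i j : ℤ, (ρD (Egen (-ε) i)).unop (Finsupp.single j (1 : K)) =
      (if j = i + 2 then (q ^ (-ε)) • Finsupp.single (i + 1) (1 : K) else 0) +
        (if i = j then Finsupp.single (i + 1) (1 : K) else 0))
    (σ : el (-ε) →ₗ[K] el ε)
    (hσmul : ∀ x y : el (-ε), σ (x * y) = σ y * σ x) (hσone : σ 1 = 1)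
    (hσgen : ∀ i : ℤ, σ (Egen (-ε) i) = (q ^ (-ε)) • Egen ε (i + 1)) :
    ∀ (u : el (-ε)) (w v : Vmod),
      pairV ((ρD u).unop w) v = pairV w ((ρV (σ u)).unop v) :=
  pairing_adjunction_general ε ρV hρV ρD hρD σ hσmul hσone hσgen

end
end
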